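/- Intermediate curvature computation: with E = (1−y)/(x(1−x)(2−x−y)) and G = (1−x)/(y(1−y)(2−x−y)) on (0,1)², one has √(EG) = 1/(√(xy)(2−x−y)), E_y = −1/(x(2−x−y)²), G_x = −1/(y(2−x−y)²), and ∂_y(E_y/√(EG)) + ∂_x(G_x/√(EG)) = −2/(√(xy)(2−x−y)²). -/

import Mathlib

/-! The metric is symmetric, `G(x, y) = E(y, x)`, so `G_x` and the second summand are the first
ones with `x` and `y` exchanged. Since `EG = 1/(xy(2-x-y)²)`, on `(0,1)²` the quotient
`E_y/√(EG)` simplifies to `-√y/(√x(2-x-y))`, whose `y`-derivative is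
`-(2-x+y)/(2√(xy)(2-x-y)²)`; adding the swapped term gives `-4/(2√(xy)(2-x-y)²)`. -/

/-- The coefficient E of the variance metric. -/
noncomputable def Emetric (x y : ℝ) : ℝ := (1 - y) / (x * (1 - x) * (2 - x - y))

/-- The coefficient G of the variance metric. -/
noncomputable def Gmetric (x y : ℝ) : ℝ := (1 - x) / (y * (1 - y) * (2 - x - y))

open Real

theorem Gmetric_eq_Emetric_swap (x y : ℝ) : Gmetric x y = Emetric y x := by
  simp only [Gmetric, Emetric, sub_right_comm _ x y]

theorem hasDerivAt_Emetric_right {x y : ℝ} (hx : x ≠ 0) (hx1 : x ≠ 1) (hxy : 2 - x - y ≠ 0) :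
    HasDerivAt (Emetric x ·) (-1 / (x * (2 - x - y) ^ 2)) y := by
  have : 1 - x ≠ 0 := sub_ne_zero.2 (Ne.symm hx1)
  have hden : x * (1 - x) * (2 - x - y) ≠ 0 := by positivity
  refine (((hasDerivAt_id' y).const_sub 1).div
    (((hasDerivAt_id' y).const_sub (2 - x)).const_mul (x * (1 - x))) hden).congr_deriv ?_
  field_simp
  ring

theorem hasDerivAt_Gmetric_left {x y : ℝ} (hy : y ≠ 0) (hy1 : y ≠ 1) (hxy : 2 - x - y ≠ 0) :
    HasDerivAt (Gmetric · y) (-1 / (y * (2 - x - y) ^ 2)) x := by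
  rw [sub_right_comm] at hxy ⊢
  simpa only [Gmetric_eq_Emetric_swap] using hasDerivAt_Emetric_right hy hy1 hxy

theorem Emetric_mul_Gmetric {x y : ℝ} (hx1 : x ≠ 1) (hy1 : y ≠ 1) :
    Emetric x y * Gmetric x y = 1 / (x * y * (2 - x - y) ^ 2) := by
  have : 1 - x ≠ 0 := sub_ne_zero.2 (Ne.symm hx1)
  have : 1 - y ≠ 0 := sub_ne_zero.2 (Ne.symm hy1)
  rw [Emetric, Gmetric, div_mul_div_comm]
  field_simp

theorem sqrt_Emetric_mul_Gmetric {x y : ℝ} (hx1 : x ≠ 1) (hy1 : y ≠ 1) (hxy : 0 ≤ 2 - x - y) :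
    √(Emetric x y * Gmetric x y) = 1 / (√(x * y) * (2 - x - y)) := by
  rw [Emetric_mul_Gmetric hx1 hy1, one_div, sqrt_inv,
    sqrt_mul' _ (by positivity), sqrt_sq hxy, one_div]

theorem hasDerivAt_sqrt_div_const_sub {c y : ℝ} (hy : 0 < y) (hcy : c - y ≠ 0) :
    HasDerivAt (fun t => √t / (c - t)) ((c + y) / (2 * √y * (c - y) ^ 2)) y := by
  have : √y ≠ 0 := (sqrt_pos.2 hy).ne'
  refine ((hasDerivAt_sqrt hy.ne').div ((hasDerivAt_id' y).const_sub c) hcy).congr_deriv ?_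
  field_simp
  rw [sq_sqrt hy.le]
  ring

theorem deriv_Emetric_div_sqrt {x y : ℝ} (hx : 0 < x) (hx1 : x ≠ 1) (hy1 : y ≠ 1)
    (hxy : 0 < 2 - x - y) :
    deriv (Emetric x ·) y / √(Emetric x y * Gmetric x y) = -(√y / (2 - x - y)) / √x := by
  have : √x ≠ 0 := (sqrt_pos.2 hx).ne'
  rw [(hasDerivAt_Emetric_right hx.ne' hx1 hxy.ne').deriv, sqrt_Emetric_mul_Gmetric hx1 hy1 hxy.le,
    sqrt_mul hx.le]
  nth_rewrite 1 [← sq_sqrt hx.le]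
  field_simp

theorem hasDerivAt_deriv_Emetric_div_sqrt {x y : ℝ} (hx : x ∈ Set.Ioo 0 1) (hy : y ∈ Set.Ioo 0 1) :
    HasDerivAt (fun t => deriv (Emetric x ·) t / √(Emetric x t * Gmetric x t))
      (-((2 - x + y) / (2 * √y * (2 - x - y) ^ 2)) / √x) y := by
  obtain ⟨hx0, hx1⟩ := hx
  have hquot : ∀ t ∈ Set.Ioo (0 : ℝ) 1,
      deriv (Emetric x ·) t / √(Emetric x t * Gmetric x t) = -(√t / (2 - x - t)) / √x :=
    fun t ht => deriv_Emetric_div_sqrt hx0 hx1.ne ht.2.ne (by linarith [ht.2])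
  have hxy : 2 - x - y ≠ 0 := by linarith [hy.2]
  exact ((hasDerivAt_sqrt_div_const_sub hy.1 hxy).neg.div_const √x).congr_of_eventuallyEq
    (Filter.eventually_of_mem (isOpen_Ioo.mem_nhds hy) hquot)

/-- intermediate curvature computations: √(EG) = 1/(√(xy)(2-x-y)),
E_y = -1/(x(2-x-y)²), G_x = -1/(y(2-x-y)²), and
(E_y/√(EG))_y + (G_x/√(EG))_x = -2/(√(xy)(2-x-y)²). -/
theorem curvature_intermediate_steps
    (x y : ℝ) (hx : x ∈ Set.Ioo (0 : ℝ) 1) (hy : y ∈ Set.Ioo (0 : ℝ) 1) :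
    Real.sqrt (Emetric x y * Gmetric x y) = 1 / (Real.sqrt (x * y) * (2 - x - y)) ∧
    deriv (fun t => Emetric x t) y = -1 / (x * (2 - x - y) ^ 2) ∧
    deriv (fun t => Gmetric t y) x = -1 / (y * (2 - x - y) ^ 2) ∧
    deriv (fun y' => deriv (fun t => Emetric x t) y'
        / Real.sqrt (Emetric x y' * Gmetric x y')) y
      + deriv (fun x' => deriv (fun t => Gmetric t y) x'
        / Real.sqrt (Emetric x' y * Gmetric x' y)) x
      = -2 / (Real.sqrt (x * y) * (2 - x - y) ^ 2) := by
  have hxy : 0 < 2 - x - y := by linarith [hx.2, hy.2]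
  refine ⟨sqrt_Emetric_mul_Gmetric hx.2.ne hy.2.ne hxy.le,
    (hasDerivAt_Emetric_right hx.1.ne' hx.2.ne hxy.ne').deriv,
    (hasDerivAt_Gmetric_left hy.1.ne' hy.2.ne hxy.ne').deriv, ?_⟩
  have hswap : (fun x' => deriv (fun t => Gmetric t y) x' / √(Emetric x' y * Gmetric x' y)) =
      fun x' => deriv (Emetric y ·) x' / √(Emetric y x' * Gmetric y x') := by
    funext x'
    simp only [Gmetric_eq_Emetric_swap, mul_comm]
  have : √x ≠ 0 := (sqrt_pos.2 hx.1).ne'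
  have : √y ≠ 0 := (sqrt_pos.2 hy.1).ne'
  rw [hswap, (hasDerivAt_deriv_Emetric_div_sqrt hx hy).deriv,
    (hasDerivAt_deriv_Emetric_div_sqrt hy hx).deriv, sqrt_mul hx.1.le, sub_right_comm 2 y x]
  field_simp
  ring
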